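/- Let n ≥ 1 and let f ∈ MvPolynomial (Fin n) ℂ. Then f is invariant under simultaneous translation of all variables — i.e. for every c ∈ ℂ, substituting X i ↦ X i + C c into f returns f — if and only if f lies in the ℂ-subalgebra of MvPolynomial (Fin n) ℂ generated by the differences {X 0 - X j | j : Fin n}. -/

import Mathlib

open scoped BigOperators
open MvPolynomial

/-- A polynomial `f ∈ ℂ[x₁, …, xₙ]` is invariant under simultaneous translation
of all variables iff it lies in the subalgebra generated by the differences
`X 0 - X j`. -/
theorem translation_invariant_iff_mem_adjoin_differences
    (n : ℕ) (hn : 1 ≤ n) (f : MvPolynomial (Fin n) ℂ) :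
    (∀ c : ℂ, aeval (fun i : Fin n => X i + C c) f = f) ↔
    f ∈ Algebra.adjoin ℂ
      {g : MvPolynomial (Fin n) ℂ |
        ∃ j : Fin n, g = X (⟨0, hn⟩ : Fin n) - X j} := by
  set i0 : Fin n := ⟨0, hn⟩ with hi0
  constructor
  · intro h
    have key : aeval (fun i : Fin n => X i - X i0) f = f := by
      apply MvPolynomial.funext
      intro x
      have h1 := congrArg (aeval x : MvPolynomial (Fin n) ℂ →ₐ[ℂ] ℂ) (h (-(x i0)))
      rw [comp_aeval_apply] at h1
      rw [show (eval x : MvPolynomial (Fin n) ℂ → ℂ) = aeval x from rfl]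
      rw [comp_aeval_apply]
      rw [← h1]
      have heq : (fun i => (aeval x : MvPolynomial (Fin n) ℂ →ₐ[ℂ] ℂ) (X i - X i0))
          = fun i => (aeval x : MvPolynomial (Fin n) ℂ →ₐ[ℂ] ℂ) (X i + C (-x i0)) := by
        funext i; simp [sub_eq_add_neg]
      rw [heq]
    clear h
    rw [← key]; clear key
    induction f using MvPolynomial.induction_on with
    | C a => simpa using Subalgebra.algebraMap_mem (Algebra.adjoin ℂ {g : MvPolynomial (Fin n) ℂ |
          ∃ j : Fin n, g = X (⟨0, hn⟩ : Fin n) - X j}) a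
    | add p q hp hq => rw [map_add]; exact add_mem hp hq
    | mul_X p i hp =>
      rw [map_mul]
      refine mul_mem hp ?_
      have hx : (aeval (fun i : Fin n => X i - X i0) :
            MvPolynomial (Fin n) ℂ →ₐ[ℂ] MvPolynomial (Fin n) ℂ) (X i)
          = X i - X i0 := by simp
      rw [hx]
      have hg : (X i0 - X i : MvPolynomial (Fin n) ℂ) ∈
          Algebra.adjoin ℂ {g : MvPolynomial (Fin n) ℂ |
            ∃ j : Fin n, g = X (⟨0, hn⟩ : Fin n) - X j} :=
        Algebra.subset_adjoin ⟨i, rfl⟩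
      simpa using neg_mem hg
  · intro hf c
    induction hf using Algebra.adjoin_induction with
    | mem g hg =>
      obtain ⟨j, rfl⟩ := hg
      simp
    | algebraMap a => simp [algebraMap_eq]
    | add p q _ _ hp hq => rw [map_add, hp, hq]
    | mul p q _ _ hp hq => rw [map_mul, hp, hq]
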